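/- (Lemma 2, second part.) Suppose X ∈ ℂ^{n1×n2} is the data matrix of the 2-D spectral model satisfying the incoherence property with parameter μ1, with enhanced form X_e = U Λ V* (compact SVD) and tangent-space projection P_T. Then for any two indices a, b ∈ {0,…,n1−1}×{0,…,n2−1}: |⟨A_b, P_T(A_a)⟩| ≤ √(ω_b/ω_a)·3·μ1·c_s·r/(n1 n2), where ⟨·,·⟩ is the Frobenius inner product. -/

import Mathlib

open scoped Classical
open Matrix

noncomputable section

namespace EMaC

/-- `e^{2π i f}` -/
def efreq (f : ℝ) : ℂ := Complex.exp (2 * Real.pi * Complex.I * (f : ℂ))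

/-- The data matrix of the 2-D spectral model:
`X_{k,l} = Σ_i d_i y_i^k z_i^l` with `y_i = e^{2πi f1 i}`, `z_i = e^{2πi f2 i}`. -/
def dataMatrix (n1 n2 r : ℕ) (d : Fin r → ℂ) (f1 f2 : Fin r → ℝ) :
    Matrix (Fin n1) (Fin n2) ℂ :=
  Matrix.of fun k l => ∑ i : Fin r, d i * efreq (f1 i) ^ (k : ℕ) * efreq (f2 i) ^ (l : ℕ)

/-- Frequencies lie in `[0,1)²` and the `r` frequency pairs are distinct. -/
structure SpectralModel (r : ℕ) (f1 f2 : Fin r → ℝ) : Prop where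
  f1_mem : ∀ i, f1 i ∈ Set.Ico (0 : ℝ) 1
  f2_mem : ∀ i, f2 i ∈ Set.Ico (0 : ℝ) 1
  distinct : Function.Injective fun i => (f1 i, f2 i)

/-- The two-fold Hankel enhanced form of an `n1 × n2` matrix, with pencil
parameters `k1, k2`. -/
def enhance {n1 n2 : ℕ} (k1 k2 : ℕ) (hk1 : k1 ≤ n1) (hk2 : k2 ≤ n2)
    (M : Matrix (Fin n1) (Fin n2) ℂ) :
    Matrix (Fin k1 × Fin k2) (Fin (n1 - k1 + 1) × Fin (n2 - k2 + 1)) ℂ :=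
  Matrix.of fun ip jq =>
    M ⟨ip.1.1 + jq.1.1, by have h1 := ip.1.isLt; have h2 := jq.1.isLt; omega⟩
      ⟨ip.2.1 + jq.2.1, by have h1 := ip.2.isLt; have h2 := jq.2.isLt; omega⟩

/-- The matrix `E_L`. -/
def EL (r k1 k2 : ℕ) (f1 f2 : Fin r → ℝ) : Matrix (Fin k1 × Fin k2) (Fin r) ℂ :=
  Matrix.of fun ip s =>
    efreq (f1 s) ^ (ip.1 : ℕ) * efreq (f2 s) ^ (ip.2 : ℕ) /
      (Real.sqrt ((k1 : ℝ) * k2) : ℂ)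

/-- The matrix `E_R`. -/
def ER (n1 n2 r k1 k2 : ℕ) (f1 f2 : Fin r → ℝ) :
    Matrix (Fin r) (Fin (n1 - k1 + 1) × Fin (n2 - k2 + 1)) ℂ :=
  Matrix.of fun s jq =>
    efreq (f1 s) ^ (jq.1 : ℕ) * efreq (f2 s) ^ (jq.2 : ℕ) /
      (Real.sqrt (((n1 - k1 + 1 : ℕ) : ℝ) * ((n2 - k2 + 1 : ℕ) : ℝ)) : ℂ)

/-- Smallest singular value of a square complex matrix. -/
def sigmaMin {n : Type*} [Fintype n] [DecidableEq n] (M : Matrix n n ℂ) : ℝ :=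
  ⨅ i, Real.sqrt ((Matrix.isHermitian_conjTranspose_mul_self M).eigenvalues i)

/-- The incoherence property with parameter `μ1`:
`σ_min(G_L) ≥ 1/μ1` and `σ_min(G_R) ≥ 1/μ1`, where `G_L = E_L* E_L` and
`G_R = (E_R E_R*)ᵀ`. -/
def Incoherent (n1 n2 r k1 k2 : ℕ) (f1 f2 : Fin r → ℝ) (μ1 : ℝ) : Prop :=
  1 / μ1 ≤ sigmaMin ((EL r k1 k2 f1 f2)ᴴ * EL r k1 k2 f1 f2) ∧
    1 / μ1 ≤ sigmaMin ((ER n1 n2 r k1 k2 f1 f2 * (ER n1 n2 r k1 k2 f1 f2)ᴴ)ᵀ)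

/-- `c_s = max{n1 n2/(k1 k2), n1 n2/((n1-k1+1)(n2-k2+1))}`. -/
def cs (n1 n2 k1 k2 : ℕ) : ℝ :=
  max (((n1 : ℝ) * n2) / ((k1 : ℝ) * k2))
    (((n1 : ℝ) * n2) / (((n1 - k1 + 1 : ℕ) : ℝ) * ((n2 - k2 + 1 : ℕ) : ℝ)))

/-- Nuclear norm: sum of singular values. -/
def nuclearNorm {p q : Type*} [Fintype p] [Fintype q] [DecidableEq q]
    (M : Matrix p q ℂ) : ℝ :=
  ∑ i, Real.sqrt ((Matrix.isHermitian_conjTranspose_mul_self M).eigenvalues i)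

/-- Spectral norm: largest singular value. -/
def specNorm {p q : Type*} [Fintype p] [Fintype q] [DecidableEq q]
    (M : Matrix p q ℂ) : ℝ :=
  ⨆ i, Real.sqrt ((Matrix.isHermitian_conjTranspose_mul_self M).eigenvalues i)

/-- Frobenius norm. -/
def frob {p q : Type*} [Fintype p] [Fintype q] (M : Matrix p q ℂ) : ℝ :=
  Real.sqrt (∑ i, ∑ j, ‖M i j‖ ^ 2)

/-- Frobenius inner product `⟨P,Q⟩ = Tr(P* Q)`. -/
def finner {p q : Type*} [Fintype p] [Fintype q] (P Q : Matrix p q ℂ) : ℂ :=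
  ∑ i, ∑ j, (starRingEnd ℂ) (P i j) * Q i j

/-- Elementwise ℓ1 norm. -/
def l1norm {p q : Type*} [Fintype p] [Fintype q] (M : Matrix p q ℂ) : ℝ :=
  ∑ i, ∑ j, ‖M i j‖

/-- `P_Ω`: keep entries on `Ω`, zero elsewhere. -/
def projOmega {n1 n2 : ℕ} (Ω : Finset (Fin n1 × Fin n2))
    (M : Matrix (Fin n1) (Fin n2) ℂ) : Matrix (Fin n1) (Fin n2) ℂ :=
  Matrix.of fun k l => if (k, l) ∈ Ω then M k l else 0

/-- `ω_{k,l} = |Ω_e(k,l)|`. -/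
def wcount (n1 n2 k1 k2 : ℕ) (a : Fin n1 × Fin n2) : ℕ :=
  (Finset.univ.filter fun e : (Fin k1 × Fin k2) × (Fin (n1 - k1 + 1) × Fin (n2 - k2 + 1)) =>
    e.1.1.1 + e.2.1.1 = (a.1 : ℕ) ∧ e.1.2.1 + e.2.2.1 = (a.2 : ℕ)).card

/-- The basis matrix `A_{(k,l)}`: `1/√ω_{k,l}` on `Ω_e(k,l)` and `0` elsewhere. -/
def Amat (n1 n2 k1 k2 : ℕ) (a : Fin n1 × Fin n2) :
    Matrix (Fin k1 × Fin k2) (Fin (n1 - k1 + 1) × Fin (n2 - k2 + 1)) ℂ :=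
  Matrix.of fun ip jq =>
    if ip.1.1 + jq.1.1 = (a.1 : ℕ) ∧ ip.2.1 + jq.2.1 = (a.2 : ℕ) then
      (((Real.sqrt (wcount n1 n2 k1 k2 a))⁻¹ : ℝ) : ℂ) else 0

/-- `A_a(M) = ⟨A_a, M⟩ A_a`. -/
def AopS (n1 n2 k1 k2 : ℕ) (a : Fin n1 × Fin n2)
    (M : Matrix (Fin k1 × Fin k2) (Fin (n1 - k1 + 1) × Fin (n2 - k2 + 1)) ℂ) :
    Matrix (Fin k1 × Fin k2) (Fin (n1 - k1 + 1) × Fin (n2 - k2 + 1)) ℂ :=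
  finner (Amat n1 n2 k1 k2 a) M • Amat n1 n2 k1 k2 a

/-- `A = Σ_{(k,l)} A_{(k,l)}`: the projection onto the span of the `A_{(k,l)}`. -/
def Aproj (n1 n2 k1 k2 : ℕ)
    (M : Matrix (Fin k1 × Fin k2) (Fin (n1 - k1 + 1) × Fin (n2 - k2 + 1)) ℂ) :
    Matrix (Fin k1 × Fin k2) (Fin (n1 - k1 + 1) × Fin (n2 - k2 + 1)) ℂ :=
  ∑ a : Fin n1 × Fin n2, AopS n1 n2 k1 k2 a M

/-- `Σ_{a ∈ s} A_a` over a (finite) set `s` of distinct indices. -/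
def AprojSet (n1 n2 k1 k2 : ℕ) (s : Finset (Fin n1 × Fin n2))
    (M : Matrix (Fin k1 × Fin k2) (Fin (n1 - k1 + 1) × Fin (n2 - k2 + 1)) ℂ) :
    Matrix (Fin k1 × Fin k2) (Fin (n1 - k1 + 1) × Fin (n2 - k2 + 1)) ℂ :=
  ∑ a ∈ s, AopS n1 n2 k1 k2 a M

/-- `A_Ω = Σ_{i} A_{a_i}` (with multiplicity) for a multiset of samples given
as a tuple `a : Fin m → Fin n1 × Fin n2`. -/
def AopTuple (n1 n2 k1 k2 m : ℕ) (a : Fin m → Fin n1 × Fin n2)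
    (M : Matrix (Fin k1 × Fin k2) (Fin (n1 - k1 + 1) × Fin (n2 - k2 + 1)) ℂ) :
    Matrix (Fin k1 × Fin k2) (Fin (n1 - k1 + 1) × Fin (n2 - k2 + 1)) ℂ :=
  ∑ i : Fin m, AopS n1 n2 k1 k2 (a i) M

/-- `P_T(M) = U U* M + M V V* − U U* M V V*`, the projection onto the
tangent space `T = {U M* + M̃ V*}`. -/
def projT {p q : Type*} [Fintype p] [Fintype q] {r' : ℕ}
    (U : Matrix p (Fin r') ℂ) (V : Matrix q (Fin r') ℂ) (M : Matrix p q ℂ) :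
    Matrix p q ℂ :=
  U * Uᴴ * M + M * (V * Vᴴ) - U * Uᴴ * M * (V * Vᴴ)

/-- `X_e = U Λ V*` is a compact SVD with positive singular values `σ`. -/
structure CompactSVD {p q : Type*} [Fintype p] [Fintype q] {r' : ℕ}
    (Xe : Matrix p q ℂ) (U : Matrix p (Fin r') ℂ) (σ : Fin r' → ℝ)
    (V : Matrix q (Fin r') ℂ) : Prop where
  U_orth : Uᴴ * U = 1
  V_orth : Vᴴ * V = 1
  sigma_pos : ∀ i, 0 < σ i
  decomp : Xe = U * Matrix.diagonal (fun i => ((σ i : ℝ) : ℂ)) * Vᴴ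

/-- `‖M‖_{A,2}²`. -/
def Anorm2sq (n1 n2 k1 k2 : ℕ)
    (M : Matrix (Fin k1 × Fin k2) (Fin (n1 - k1 + 1) × Fin (n2 - k2 + 1)) ℂ) : ℝ :=
  ∑ a : Fin n1 × Fin n2, ‖finner (Amat n1 n2 k1 k2 a) M‖ ^ 2 / (wcount n1 n2 k1 k2 a : ℝ)

/-- `‖M‖_{A,∞}`. -/
def AnormInf (n1 n2 k1 k2 : ℕ)
    (M : Matrix (Fin k1 × Fin k2) (Fin (n1 - k1 + 1) × Fin (n2 - k2 + 1)) ℂ) : ℝ :=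
  ⨆ a : Fin n1 × Fin n2,
    ‖finner (Amat n1 n2 k1 k2 a) M‖ / Real.sqrt (wcount n1 n2 k1 k2 a)

/-- Complex sign. -/
def csgn (z : ℂ) : ℂ := if z = 0 then 0 else z / (‖z‖ : ℂ)

/-- Entrywise complex sign of a matrix. -/
def matSgn {p q : Type*} (M : Matrix p q ℂ) : Matrix p q ℂ :=
  Matrix.of fun i j => csgn (M i j)

end EMaC

namespace EMaC

/-- The set of distinct sample locations of the sample tuple (multiset) `a`. -/
def sampleSet {n1 n2 m : ℕ} (a : Fin m → Fin n1 × Fin n2) : Finset (Fin n1 × Fin n2) :=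
  Finset.image a Finset.univ

/-- The set of distinct locations among the first `mclean` samples of `a`. -/
def cleanSet {n1 n2 m : ℕ} (mclean : ℕ) (a : Fin m → Fin n1 × Fin n2) :
    Finset (Fin n1 × Fin n2) :=
  Finset.image a (Finset.univ.filter fun i => (i : ℕ) < mclean)

/-- `Ω^dirty`: distinct locations of `a` not among the first `mclean` (clean) samples. -/
def dirtySet {n1 n2 m : ℕ} (mclean : ℕ) (a : Fin m → Fin n1 × Fin n2) :
    Finset (Fin n1 × Fin n2) :=
  sampleSet a \ cleanSet mclean a

/-- `A_{Ω^clean}` (with multiplicity): sum over the first `mclean` samples. -/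
def AopClean (n1 n2 k1 k2 m mclean : ℕ) (a : Fin m → Fin n1 × Fin n2)
    (M : Matrix (Fin k1 × Fin k2) (Fin (n1 - k1 + 1) × Fin (n2 - k2 + 1)) ℂ) :
    Matrix (Fin k1 × Fin k2) (Fin (n1 - k1 + 1) × Fin (n2 - k2 + 1)) ℂ :=
  ∑ i ∈ Finset.univ.filter (fun i : Fin m => (i : ℕ) < mclean), AopS n1 n2 k1 k2 (a i) M

/-- The Robust-EMaC objective `‖M_e‖_* + λ ‖Ŝ_e‖_1`. -/
def robustObj (n1 n2 k1 k2 : ℕ) (hk1' : k1 ≤ n1) (hk2' : k2 ≤ n2) (lam : ℝ)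
    (M S : Matrix (Fin n1) (Fin n2) ℂ) : ℝ :=
  nuclearNorm (enhance k1 k2 hk1' hk2' M) + lam * l1norm (enhance k1 k2 hk1' hk2' S)

/-- `(M̂, Ŝ)` is a minimizer of Robust-EMaC with observations `P_Ω(X + S)`. -/
def RobustMinimizer (n1 n2 k1 k2 : ℕ) (hk1' : k1 ≤ n1) (hk2' : k2 ≤ n2) (lam : ℝ)
    (Ω : Finset (Fin n1 × Fin n2)) (X S Mhat Shat : Matrix (Fin n1) (Fin n2) ℂ) : Prop :=
  projOmega Ω (Mhat + Shat) = projOmega Ω (X + S) ∧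
    ∀ M' S' : Matrix (Fin n1) (Fin n2) ℂ,
      projOmega Ω (M' + S') = projOmega Ω (X + S) →
      robustObj n1 n2 k1 k2 hk1' hk2' lam Mhat Shat ≤
        robustObj n1 n2 k1 k2 hk1' hk2' lam M' S'

/-- `X` is the unique solution of the EMaC program with observed entries `Ω`:
every feasible `M` is either `X` itself or has strictly larger enhanced
nuclear norm. -/
def UniqueEMaCSolution (n1 n2 k1 k2 : ℕ) (hk1' : k1 ≤ n1) (hk2' : k2 ≤ n2)
    (Ω : Finset (Fin n1 × Fin n2)) (X : Matrix (Fin n1) (Fin n2) ℂ) : Prop :=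
  ∀ M : Matrix (Fin n1) (Fin n2) ℂ,
    (∀ e ∈ Ω, M e.1 e.2 = X e.1 e.2) →
    M = X ∨
      nuclearNorm (enhance k1 k2 hk1' hk2' X) < nuclearNorm (enhance k1 k2 hk1' hk2' M)

/-- `sgn(S)` in the random-sign outlier model: the random sign `K` on `Ω^dirty`
and zero elsewhere. -/
def dirtySign {n1 n2 m : ℕ} (mclean : ℕ) (a : Fin m → Fin n1 × Fin n2)
    (K : Fin n1 × Fin n2 → ℂ) : Matrix (Fin n1) (Fin n2) ℂ :=
  Matrix.of fun α β => if (α, β) ∈ dirtySet mclean a then K (α, β) else 0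

end EMaC

/-!
`X_e = E_L D E_R` with `D` diagonal, so the compact SVD factors satisfy `U = E_L C` and
`V = E_Rᴴ C'`. Testing a row `U_α` of the isometry `U` against its own conjugate and using
`σ_min(G_L) ≥ 1/μ1` gives `‖U_α‖² ≤ μ1 ‖(E_L)_α‖² = μ1 r/(k1 k2) ≤ μ1 c_s r/(n1 n2) =: K`, and
likewise for the rows of `V`. Hence the entries of `U U*` and `V V*` are at most `K` and their rows
have squared norm at most `K`. Since `A_a` has at most one nonzero entry `ω_a^{-1/2}` in each row
and column, each of the three terms of `P_T(A_a)` has entries at most `K ω_a^{-1/2}` (the term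
`U U* A_a V V*` by the Schur test), while the entries of `A_b` sum to `√ω_b`.
-/

open scoped ComplexOrder

theorem div_le_mul_div_of_div_le {a c x N : ℝ} (hN : 0 < N) (ha : 0 ≤ a) (h : N / x ≤ c) :
    a / x ≤ c * a / N :=
  calc a / x = N / x * a / N := by field_simp
    _ ≤ c * a / N := by gcongr

theorem Fintype.sum_ite_le_of_subsingleton {ι : Type*} [Fintype ι] {p : ι → Prop}
    [DecidablePred p] (hp : {i | p i}.Subsingleton) {c : ℝ} (hc : 0 ≤ c) :
    ∑ i, (if p i then c else 0) ≤ c := by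
  rw [← Finset.sum_filter, Finset.sum_const, nsmul_eq_mul]
  refine mul_le_of_le_one_left hc (Nat.cast_le_one.2 (Finset.card_le_one.2 fun x hx y hy => ?_))
  simp only [Finset.mem_filter, Finset.mem_univ, true_and] at hx hy
  exact hp hx hy

namespace Matrix
variable {m n : Type*} [Fintype m] [Fintype n]

theorem re_star_dotProduct_self (v : n → ℂ) : (star v ⬝ᵥ v).re = ∑ i, ‖v i‖ ^ 2 := by
  simp [dotProduct, Complex.re_sum, Complex.sq_norm, Complex.normSq_apply]

theorem norm_dotProduct_le (x y : n → ℂ) :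
    ‖x ⬝ᵥ y‖ ≤ √(∑ i, ‖x i‖ ^ 2) * √(∑ i, ‖y i‖ ^ 2) :=
  (norm_sum_le _ _).trans <| (Finset.sum_le_sum fun _ _ => (norm_mul _ _).le).trans <|
    Real.sum_mul_le_sqrt_mul_sqrt _ _ _

theorem norm_dotProduct_le_mul_sum_norm {x : n → ℂ} {K : ℝ} (hx : ∀ i, ‖x i‖ ≤ K)
    (y : n → ℂ) :
    ‖x ⬝ᵥ y‖ ≤ K * ∑ i, ‖y i‖ := by
  rw [Finset.mul_sum]
  exact (norm_sum_le _ _).trans <| Finset.sum_le_sum fun i _ =>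
    (norm_mul _ _).trans_le (mul_le_mul_of_nonneg_right (hx i) (norm_nonneg _))

/-- Schur test. -/
theorem norm_dotProduct_mulVec_le {A : Matrix m n ℂ} {s : ℝ} (hs : 0 ≤ s)
    (hrow : ∀ i, ∑ j, ‖A i j‖ ≤ s) (hcol : ∀ j, ∑ i, ‖A i j‖ ≤ s) (x : m → ℂ) (y : n → ℂ) :
    ‖x ⬝ᵥ (A *ᵥ y)‖ ≤ s * √(∑ i, ‖x i‖ ^ 2) * √(∑ j, ‖y j‖ ^ 2) := by
  have hx : ∑ i, ∑ j, (‖x i‖ * √‖A i j‖) ^ 2 ≤ s * ∑ i, ‖x i‖ ^ 2 := by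
    rw [Finset.mul_sum]
    refine Finset.sum_le_sum fun i _ => ?_
    simp_rw [mul_pow, Real.sq_sqrt (norm_nonneg _), ← Finset.mul_sum]
    nlinarith [hrow i, sq_nonneg ‖x i‖]
  have hy : ∑ i, ∑ j, (√‖A i j‖ * ‖y j‖) ^ 2 ≤ s * ∑ j, ‖y j‖ ^ 2 := by
    rw [Finset.sum_comm, Finset.mul_sum]
    refine Finset.sum_le_sum fun j _ => ?_
    simp_rw [mul_pow, Real.sq_sqrt (norm_nonneg _), ← Finset.sum_mul]
    nlinarith [hcol j, sq_nonneg ‖y j‖]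
  calc ‖x ⬝ᵥ (A *ᵥ y)‖ ≤ ∑ i, ∑ j, (‖x i‖ * √‖A i j‖) * (√‖A i j‖ * ‖y j‖) := by
        refine (norm_sum_le _ _).trans (Finset.sum_le_sum fun i _ => ?_)
        rw [norm_mul]
        refine (mul_le_mul_of_nonneg_left (norm_sum_le _ _) (norm_nonneg _)).trans_eq ?_
        rw [Finset.mul_sum]
        refine Finset.sum_congr rfl fun j _ => ?_
        rw [norm_mul]
        linear_combination -(‖x i‖ * ‖y j‖) * Real.mul_self_sqrt (norm_nonneg (A i j))
    _ ≤ √(∑ i, ∑ j, (‖x i‖ * √‖A i j‖) ^ 2) * √(∑ i, ∑ j, (√‖A i j‖ * ‖y j‖) ^ 2) := by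
        simp_rw [← Fintype.sum_prod_type']
        exact Real.sum_mul_le_sqrt_mul_sqrt _ _ _
    _ ≤ √(s * ∑ i, ‖x i‖ ^ 2) * √(s * ∑ j, ‖y j‖ ^ 2) := by gcongr
    _ = s * √(∑ i, ‖x i‖ ^ 2) * √(∑ j, ‖y j‖ ^ 2) := by
        rw [Real.sqrt_mul hs, Real.sqrt_mul hs, mul_mul_mul_comm, Real.mul_self_sqrt hs, mul_assoc]

theorem re_star_dotProduct_conjTranspose_mul_self_mulVec (E : Matrix m n ℂ) (w : n → ℂ) :
    (star w ⬝ᵥ ((Eᴴ * E) *ᵥ w)).re = ∑ i, ‖(E *ᵥ w) i‖ ^ 2 := by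
  rw [← mulVec_mulVec, dotProduct_mulVec, ← star_mulVec, re_star_dotProduct_self]

theorem norm_mul_conjTranspose_apply_le {p : Type*} (U : Matrix p n ℂ) (α β : p) :
    ‖(U * Uᴴ) α β‖ ≤ √(∑ j, ‖U α j‖ ^ 2) * √(∑ j, ‖U β j‖ ^ 2) := by
  rw [mul_apply']
  refine (norm_dotProduct_le _ _).trans_eq ?_
  simp [conjTranspose_apply]

variable [DecidableEq n]

theorem sum_norm_mulVec_sq_of_conjTranspose_mul_self_eq_one
    {U : Matrix m n ℂ} (hU : Uᴴ * U = 1) (x : n → ℂ) :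
    ∑ i, ‖(U *ᵥ x) i‖ ^ 2 = ∑ i, ‖x i‖ ^ 2 := by
  rw [← re_star_dotProduct_conjTranspose_mul_self_mulVec, hU, one_mulVec,
    re_star_dotProduct_self]

theorem IsHermitian.posSemidef_sub_smul_one {A : Matrix n n ℂ} (hA : A.IsHermitian) {c : ℝ}
    (hc : ∀ i, c ≤ hA.eigenvalues i) : (A - (c : ℂ) • 1).PosSemidef := by
  have hdiag : A - (c : ℂ) • 1 = Unitary.conjStarAlgAut ℂ _ hA.eigenvectorUnitary
      (diagonal fun i => ((hA.eigenvalues i - c : ℝ) : ℂ)) := by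
    conv_lhs => rw [hA.spectral_theorem]
    rw [← map_one (Unitary.conjStarAlgAut ℂ _ hA.eigenvectorUnitary), ← map_smul, ← map_sub]
    congr 1
    ext i j
    by_cases h : i = j <;> simp [h, diagonal]
  rw [hdiag, Unitary.conjStarAlgAut_apply,
    Unitary.isUnit_coe.posSemidef_star_right_conjugate_iff, posSemidef_diagonal_iff]
  exact fun i => mod_cast sub_nonneg.2 (hc i)

theorem IsHermitian.mul_sum_norm_sq_le_re_dotProduct_mulVec {A : Matrix n n ℂ}
    (hA : A.IsHermitian) {c : ℝ} (hc : ∀ i, c ≤ hA.eigenvalues i) (v : n → ℂ) :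
    c * ∑ i, ‖v i‖ ^ 2 ≤ (star v ⬝ᵥ (A *ᵥ v)).re := by
  have h := (hA.posSemidef_sub_smul_one hc).re_dotProduct_nonneg v
  simp only [sub_mulVec, smul_mulVec, one_mulVec, dotProduct_sub, dotProduct_smul,
    RCLike.re_to_complex, Complex.sub_re, smul_eq_mul, Complex.re_ofReal_mul,
    re_star_dotProduct_self] at h
  linarith

theorem PosSemidef.le_eigenvalues_of_forall_le_sum_norm_mulVec_sq {G : Matrix n n ℂ}
    (hG : G.PosSemidef) {c : ℝ} (hc0 : 0 ≤ c)
    (hc : ∀ w, c ^ 2 * ∑ i, ‖w i‖ ^ 2 ≤ ∑ i, ‖(G *ᵥ w) i‖ ^ 2) (i : n) :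
    c ≤ hG.1.eigenvalues i := by
  have hu : ∑ j, ‖hG.1.eigenvectorBasis i j‖ ^ 2 = 1 := by
    rw [← EuclideanSpace.norm_sq_eq, hG.1.eigenvectorBasis.orthonormal.1 i, one_pow]
  have h := hc (hG.1.eigenvectorBasis i)
  simp only [hG.1.mulVec_eigenvectorBasis, Pi.smul_apply, norm_smul, mul_pow,
    ← Finset.mul_sum, hu, mul_one, Real.norm_eq_abs, sq_abs] at h
  exact (pow_le_pow_iff_left₀ hc0 (hG.eigenvalues_nonneg i) two_ne_zero).1 h

theorem sum_norm_sq_le_of_conjTranspose_mul_self_eq_one_of_eq_mul {k : Type*} [Fintype k]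
    {U : Matrix m n ℂ} {E : Matrix m k ℂ} {C : Matrix k n ℂ} {μ : ℝ} (hμ : 0 ≤ μ)
    (hU : Uᴴ * U = 1) (hUEC : U = E * C)
    (hE : ∀ w, ∑ t, ‖w t‖ ^ 2 ≤ μ * ∑ i, ‖(E *ᵥ w) i‖ ^ 2) (α : m) :
    ∑ j, ‖U α j‖ ^ 2 ≤ μ * ∑ t, ‖E α t‖ ^ 2 := by
  set ρ := ∑ j, ‖U α j‖ ^ 2
  set ε := ∑ t, ‖E α t‖ ^ 2
  have hρ0 : 0 ≤ ρ := by positivity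
  have hx : ∑ j, ‖star (U α) j‖ ^ 2 = ρ := by simp only [Pi.star_apply, norm_star]; rfl
  -- test the row `U α` against its own conjugate, which `U` maps into the range of `E`
  have hρ : ρ ≤ ‖(U *ᵥ star (U α)) α‖ :=
    (re_star_dotProduct_self (U α)).symm.trans_le <| by
      rw [dotProduct_comm]
      exact Complex.re_le_norm _
  have hCx : ∑ t, ‖(C *ᵥ star (U α)) t‖ ^ 2 ≤ μ * ρ := by
    refine (hE _).trans_eq ?_
    rw [mulVec_mulVec, ← hUEC, sum_norm_mulVec_sq_of_conjTranspose_mul_self_eq_one hU, hx]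
  have hsq : ρ ≤ √(ε * (μ * ρ)) := by
    calc ρ ≤ ‖E α ⬝ᵥ (C *ᵥ star (U α))‖ := by
          rwa [show U *ᵥ star (U α) = E *ᵥ (C *ᵥ star (U α)) by rw [mulVec_mulVec, ← hUEC]] at hρ
    _ ≤ √ε * √(∑ t, ‖(C *ᵥ star (U α)) t‖ ^ 2) := norm_dotProduct_le _ _
    _ ≤ √ε * √(μ * ρ) := by gcongr
    _ = √(ε * (μ * ρ)) := (Real.sqrt_mul (by positivity) _).symm
  have := (Real.le_sqrt hρ0 (by positivity)).1 hsq
  nlinarith [mul_nonneg hμ (show 0 ≤ ε by positivity)]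

theorem sum_norm_mul_conjTranspose_apply_sq {U : Matrix m n ℂ} (hU : Uᴴ * U = 1) (α : m) :
    ∑ β, ‖(U * Uᴴ) α β‖ ^ 2 = ∑ j, ‖U α j‖ ^ 2 := by
  have h : ∀ β, ‖(U * Uᴴ) α β‖ = ‖(U *ᵥ star (U α)) β‖ := fun β => by
    rw [← (isHermitian_mul_conjTranspose_self U).apply, norm_star]
    rfl
  simp_rw [h, sum_norm_mulVec_sq_of_conjTranspose_mul_self_eq_one hU, Pi.star_apply, norm_star]

end Matrix

namespace EMaC

section SingularValues

variable {m n : Type*} [Fintype m] [Fintype n] [DecidableEq n]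

theorem mul_sum_norm_sq_le_re_dotProduct_mulVec_of_le_sigmaMin {G : Matrix n n ℂ}
    (hG : G.PosSemidef) {c : ℝ} (hc0 : 0 ≤ c) (hc : c ≤ sigmaMin G) (v : n → ℂ) :
    c * ∑ i, ‖v i‖ ^ 2 ≤ (star v ⬝ᵥ (G *ᵥ v)).re := by
  have hGG := isHermitian_conjTranspose_mul_self G
  have heig : ∀ i, c ^ 2 ≤ hGG.eigenvalues i := fun i =>
    (Real.le_sqrt hc0 (eigenvalues_conjTranspose_mul_self_nonneg G i)).1 <|
      hc.trans (ciInf_le (Set.finite_range _).bddBelow i)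
  have hGw : ∀ w, c ^ 2 * ∑ i, ‖w i‖ ^ 2 ≤ ∑ i, ‖(G *ᵥ w) i‖ ^ 2 := fun w =>
    (hGG.mul_sum_norm_sq_le_re_dotProduct_mulVec heig w).trans_eq
      (re_star_dotProduct_conjTranspose_mul_self_mulVec G w)
  exact hG.1.mul_sum_norm_sq_le_re_dotProduct_mulVec
    (hG.le_eigenvalues_of_forall_le_sum_norm_mulVec_sq hc0 hGw) v

theorem sum_norm_sq_le_of_inv_le_sigmaMin (E : Matrix m n ℂ) {μ : ℝ} (hμ : 0 < μ)
    (h : 1 / μ ≤ sigmaMin (Eᴴ * E)) (w : n → ℂ) :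
    ∑ i, ‖w i‖ ^ 2 ≤ μ * ∑ i, ‖(E *ᵥ w) i‖ ^ 2 := by
  have := mul_sum_norm_sq_le_re_dotProduct_mulVec_of_le_sigmaMin
    (posSemidef_conjTranspose_mul_self E) (by positivity) h w
  rw [re_star_dotProduct_conjTranspose_mul_self_mulVec] at this
  rwa [one_div, inv_mul_le_iff₀ hμ] at this

end SingularValues

section TangentProjection

variable {p q : Type*} [Fintype p] [Fintype q] {r' : ℕ}

theorem norm_projT_apply_le {U : Matrix p (Fin r') ℂ} {V : Matrix q (Fin r') ℂ}
    {A : Matrix p q ℂ} {K s : ℝ} (hU : Uᴴ * U = 1) (hV : Vᴴ * V = 1)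
    (hUrow : ∀ α, ∑ j, ‖U α j‖ ^ 2 ≤ K) (hVrow : ∀ γ, ∑ j, ‖V γ j‖ ^ 2 ≤ K) (hs : 0 ≤ s)
    (hArow : ∀ β, ∑ δ, ‖A β δ‖ ≤ s) (hAcol : ∀ δ, ∑ β, ‖A β δ‖ ≤ s) (α : p) (γ : q) :
    ‖projT U V A α γ‖ ≤ 3 * (K * s) := by
  set P := U * Uᴴ
  set Q := V * Vᴴ
  have hK : 0 ≤ K := (Finset.sum_nonneg fun _ _ => sq_nonneg _).trans (hUrow α)
  have hsqrtK : √K * √K = K := Real.mul_self_sqrt hK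
  have hP : ∀ β, ‖P α β‖ ≤ K := fun β =>
    (norm_mul_conjTranspose_apply_le U α β).trans <| hsqrtK ▸ by gcongr <;> apply hUrow
  have hQ : ∀ δ, ‖Q δ γ‖ ≤ K := fun δ =>
    (norm_mul_conjTranspose_apply_le V δ γ).trans <| hsqrtK ▸ by gcongr <;> apply hVrow
  have hPsq : ∑ β, ‖P α β‖ ^ 2 ≤ K :=
    (sum_norm_mul_conjTranspose_apply_sq hU α).trans_le (hUrow α)
  have hQsq : ∑ δ, ‖Q δ γ‖ ^ 2 ≤ K := by
    have hQ' : ∀ δ, ‖Q δ γ‖ = ‖Q γ δ‖ := fun δ =>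
      (congrArg norm ((isHermitian_mul_conjTranspose_self V).apply δ γ)).symm.trans (norm_star _)
    simp_rw [hQ']
    exact (sum_norm_mul_conjTranspose_apply_sq hV γ).trans_le (hVrow γ)
  have hPA : ‖(P * A) α γ‖ ≤ K * s := by
    rw [mul_apply']
    exact (norm_dotProduct_le_mul_sum_norm hP _).trans (by gcongr; exact hAcol γ)
  have hAQ : ‖(A * Q) α γ‖ ≤ K * s := by
    rw [mul_apply', dotProduct_comm]
    exact (norm_dotProduct_le_mul_sum_norm hQ _).trans (by gcongr; exact hArow α)
  have hPAQ : ‖(P * A * Q) α γ‖ ≤ K * s := by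
    rw [Matrix.mul_assoc, mul_apply']
    calc ‖P α ⬝ᵥ (A *ᵥ fun δ => Q δ γ)‖
        ≤ s * √(∑ β, ‖P α β‖ ^ 2) * √(∑ δ, ‖Q δ γ‖ ^ 2) :=
          norm_dotProduct_mulVec_le hs hArow hAcol _ _
      _ ≤ s * √K * √K := by gcongr
      _ = K * s := by rw [mul_assoc, hsqrtK, mul_comm]
  have hsplit : projT U V A α γ = (P * A) α γ + (A * Q) α γ - (P * A * Q) α γ := rfl
  rw [hsplit]
  linarith [norm_sub_le ((P * A) α γ + (A * Q) α γ) ((P * A * Q) α γ),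
    norm_add_le ((P * A) α γ) ((A * Q) α γ)]

theorem norm_finner_le_l1norm_mul {B M : Matrix p q ℂ} {c : ℝ} (hM : ∀ i j, ‖M i j‖ ≤ c) :
    ‖finner B M‖ ≤ l1norm B * c := by
  rw [l1norm, Finset.sum_mul]
  refine (norm_sum_le _ _).trans (Finset.sum_le_sum fun i _ => ?_)
  rw [Finset.sum_mul]
  refine (norm_sum_le _ _).trans (Finset.sum_le_sum fun j _ => ?_)
  rw [norm_mul, RCLike.norm_conj]
  exact mul_le_mul_of_nonneg_left (hM i j) (norm_nonneg _)

end TangentProjection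

section CompactSVD

variable {p q : Type*} [Fintype p] [Fintype q] {r' : ℕ} {X : Matrix p q ℂ}
  {U : Matrix p (Fin r') ℂ} {σ : Fin r' → ℝ} {V : Matrix q (Fin r') ℂ}

theorem CompactSVD.conjTranspose (h : CompactSVD X U σ V) : CompactSVD Xᴴ V σ U where
  U_orth := h.V_orth
  V_orth := h.U_orth
  sigma_pos := h.sigma_pos
  decomp := by
    rw [h.decomp, conjTranspose_mul, conjTranspose_mul, conjTranspose_conjTranspose,
      diagonal_conjTranspose, Matrix.mul_assoc]
    congr 3
    ext i
    simp

theorem CompactSVD.exists_eq_mul_of_eq_mul {m : Type*} [Fintype m] {E : Matrix p m ℂ}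
    {B : Matrix m q ℂ} (h : CompactSVD X U σ V) (hX : X = E * B) : ∃ C, U = E * C := by
  refine ⟨B * V * diagonal fun i => (((σ i)⁻¹ : ℝ) : ℂ), ?_⟩
  have hXV : X * V = U * diagonal fun i => ((σ i : ℝ) : ℂ) := by
    rw [h.decomp, Matrix.mul_assoc, h.V_orth, Matrix.mul_one]
  have hσ : ((diagonal fun i => ((σ i : ℝ) : ℂ)) * diagonal fun i => (((σ i)⁻¹ : ℝ) : ℂ)) = 1 := by
    rw [diagonal_mul_diagonal, ← diagonal_one]
    congr 1
    ext i
    rw [← Complex.ofReal_mul, mul_inv_cancel₀ (h.sigma_pos i).ne', Complex.ofReal_one]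
  calc U = X * V * diagonal fun i => (((σ i)⁻¹ : ℝ) : ℂ) := by
        rw [hXV, Matrix.mul_assoc, hσ, Matrix.mul_one]
    _ = E * (B * V * diagonal fun i => (((σ i)⁻¹ : ℝ) : ℂ)) := by
        rw [hX]
        simp only [Matrix.mul_assoc]

end CompactSVD

section Hankel

variable {n1 n2 k1 k2 : ℕ}

theorem norm_Amat_apply (a : Fin n1 × Fin n2) (β : Fin k1 × Fin k2)
    (γ : Fin (n1 - k1 + 1) × Fin (n2 - k2 + 1)) :
    ‖Amat n1 n2 k1 k2 a β γ‖ =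
      if β.1.1 + γ.1.1 = a.1 ∧ β.2.1 + γ.2.1 = a.2 then (√(wcount n1 n2 k1 k2 a))⁻¹ else 0 := by
  by_cases h : β.1.1 + γ.1.1 = a.1 ∧ β.2.1 + γ.2.1 = a.2 <;> simp [Amat, h]

theorem sum_norm_Amat_row_le (a : Fin n1 × Fin n2) (β : Fin k1 × Fin k2) :
    ∑ γ, ‖Amat n1 n2 k1 k2 a β γ‖ ≤ (√(wcount n1 n2 k1 k2 a))⁻¹ := by
  simp_rw [norm_Amat_apply]
  refine Fintype.sum_ite_le_of_subsingleton (fun x hx y hy => ?_) (by positivity)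
  obtain ⟨_, _⟩ := hx
  obtain ⟨_, _⟩ := hy
  ext <;> omega

theorem sum_norm_Amat_col_le (a : Fin n1 × Fin n2) (γ : Fin (n1 - k1 + 1) × Fin (n2 - k2 + 1)) :
    ∑ β, ‖Amat n1 n2 k1 k2 a β γ‖ ≤ (√(wcount n1 n2 k1 k2 a))⁻¹ := by
  simp_rw [norm_Amat_apply]
  refine Fintype.sum_ite_le_of_subsingleton (fun x hx y hy => ?_) (by positivity)
  obtain ⟨_, _⟩ := hx
  obtain ⟨_, _⟩ := hy
  ext <;> omega

theorem l1norm_Amat (a : Fin n1 × Fin n2) :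
    l1norm (Amat n1 n2 k1 k2 a) = √(wcount n1 n2 k1 k2 a) := by
  simp_rw [l1norm, norm_Amat_apply]
  rw [← Fintype.sum_prod_type', ← Finset.sum_filter, Finset.sum_const, nsmul_eq_mul,
    ← div_eq_mul_inv, wcount, Real.div_sqrt]

end Hankel

section SpectralModel

variable {n1 n2 r r' k1 k2 : ℕ} {f1 f2 : Fin r → ℝ}

theorem norm_efreq (f : ℝ) : ‖efreq f‖ = 1 := by
  rw [efreq, Complex.norm_exp]
  simp

theorem enhance_dataMatrix (hk1' : k1 ≤ n1) (hk2' : k2 ≤ n2) (d : Fin r → ℂ) :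
    enhance k1 k2 hk1' hk2' (dataMatrix n1 n2 r d f1 f2) =
      EL r k1 k2 f1 f2 * diagonal (fun s => ((√((k1 : ℝ) * k2) : ℝ) : ℂ) *
        ((√(((n1 - k1 + 1 : ℕ) : ℝ) * ((n2 - k2 + 1 : ℕ) : ℝ)) : ℝ) : ℂ) * d s) *
        ER n1 n2 r k1 k2 f1 f2 := by
  ext ip jq
  have hk : (0 : ℝ) < (k1 : ℝ) * k2 := by
    have := ip.1.pos
    have := ip.2.pos
    positivity
  have hm : (0 : ℝ) < ((n1 - k1 + 1 : ℕ) : ℝ) * ((n2 - k2 + 1 : ℕ) : ℝ) := by positivity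
  have hk' : ((√((k1 : ℝ) * k2) : ℝ) : ℂ) ≠ 0 := by exact_mod_cast (Real.sqrt_pos.2 hk).ne'
  have hm' : ((√(((n1 - k1 + 1 : ℕ) : ℝ) * ((n2 - k2 + 1 : ℕ) : ℝ)) : ℝ) : ℂ) ≠ 0 := by
    exact_mod_cast (Real.sqrt_pos.2 hm).ne'
  rw [mul_apply]
  simp only [mul_diagonal, enhance, dataMatrix, EL, ER, of_apply]
  refine Finset.sum_congr rfl fun s _ => ?_
  field_simp
  ring

theorem norm_efreq_pow_mul_efreq_pow_div_sqrt_sq (f g : ℝ) (i j : ℕ) {x : ℝ} (hx : 0 ≤ x) :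
    ‖efreq f ^ i * efreq g ^ j / ((√x : ℝ) : ℂ)‖ ^ 2 = x⁻¹ := by
  rw [norm_div, norm_mul, norm_pow, norm_pow, norm_efreq, norm_efreq, Complex.norm_real,
    Real.norm_of_nonneg (Real.sqrt_nonneg _), one_pow, one_pow, one_mul, div_pow,
    Real.sq_sqrt hx, one_pow, one_div]

theorem sum_norm_EL_apply_sq (α : Fin k1 × Fin k2) :
    ∑ t, ‖EL r k1 k2 f1 f2 α t‖ ^ 2 = r / ((k1 : ℝ) * k2) := by
  simp only [EL, of_apply, norm_efreq_pow_mul_efreq_pow_div_sqrt_sq _ _ _ _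
    (by positivity : (0 : ℝ) ≤ k1 * k2)]
  rw [Finset.sum_const, Finset.card_univ, Fintype.card_fin, nsmul_eq_mul, div_eq_mul_inv]

theorem sum_norm_conjTranspose_ER_apply_sq (γ : Fin (n1 - k1 + 1) × Fin (n2 - k2 + 1)) :
    ∑ t, ‖(ER n1 n2 r k1 k2 f1 f2)ᴴ γ t‖ ^ 2 =
      r / (((n1 - k1 + 1 : ℕ) : ℝ) * ((n2 - k2 + 1 : ℕ) : ℝ)) := by
  simp only [conjTranspose_apply, norm_star, ER, of_apply,
    norm_efreq_pow_mul_efreq_pow_div_sqrt_sq _ _ _ _ (by positivity :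
      (0 : ℝ) ≤ ((n1 - k1 + 1 : ℕ) : ℝ) * ((n2 - k2 + 1 : ℕ) : ℝ))]
  rw [Finset.sum_const, Finset.card_univ, Fintype.card_fin, nsmul_eq_mul, div_eq_mul_inv]

variable {μ : ℝ}

theorem Incoherent.sum_norm_sq_le_EL_mulVec (h : Incoherent n1 n2 r k1 k2 f1 f2 μ)
    (hμ : 0 < μ) (w : Fin r → ℂ) :
    ∑ t, ‖w t‖ ^ 2 ≤ μ * ∑ i, ‖(EL r k1 k2 f1 f2 *ᵥ w) i‖ ^ 2 :=
  sum_norm_sq_le_of_inv_le_sigmaMin _ hμ h.1 w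

theorem Incoherent.sum_norm_sq_le_conjTranspose_ER_mulVec
    (h : Incoherent n1 n2 r k1 k2 f1 f2 μ) (hμ : 0 < μ) (w : Fin r → ℂ) :
    ∑ t, ‖w t‖ ^ 2 ≤ μ * ∑ i, ‖((ER n1 n2 r k1 k2 f1 f2)ᴴ *ᵥ w) i‖ ^ 2 := by
  set E := ER n1 n2 r k1 k2 f1 f2
  -- `G_R = (E Eᴴ)ᵀ` is the Gram matrix of `Eᵀ`, and `Eᵀ (star w) = star (Eᴴ w)`
  have hG : (E * Eᴴ)ᵀ = (Eᵀ)ᴴ * Eᵀ := by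
    rw [transpose_mul]
    rfl
  have := sum_norm_sq_le_of_inv_le_sigmaMin Eᵀ hμ (hG ▸ h.2) (star w)
  rw [mulVec_transpose, ← conjTranspose_conjTranspose E, ← star_mulVec] at this
  simpa [norm_star] using this

variable {U : Matrix (Fin k1 × Fin k2) (Fin r') ℂ} {σ : Fin r' → ℝ}
  {V : Matrix (Fin (n1 - k1 + 1) × Fin (n2 - k2 + 1)) (Fin r') ℂ} {hk1' : k1 ≤ n1}
  {hk2' : k2 ≤ n2} {d : Fin r → ℂ}

theorem CompactSVD.sum_norm_left_apply_sq_le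
    (hsvd : CompactSVD (enhance k1 k2 hk1' hk2' (dataMatrix n1 n2 r d f1 f2)) U σ V)
    (hinc : Incoherent n1 n2 r k1 k2 f1 f2 μ) (hμ : 0 < μ) (hn : (0 : ℝ) < n1 * n2)
    (α : Fin k1 × Fin k2) :
    ∑ j, ‖U α j‖ ^ 2 ≤ μ * (cs n1 n2 k1 k2 * r / (n1 * n2)) := by
  obtain ⟨C, hC⟩ := hsvd.exists_eq_mul_of_eq_mul
    ((enhance_dataMatrix hk1' hk2' d).trans (Matrix.mul_assoc _ _ _))
  refine (sum_norm_sq_le_of_conjTranspose_mul_self_eq_one_of_eq_mul hμ.le hsvd.U_orth hC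
    (hinc.sum_norm_sq_le_EL_mulVec hμ) α).trans ?_
  rw [sum_norm_EL_apply_sq]
  exact mul_le_mul_of_nonneg_left
    (div_le_mul_div_of_div_le hn (Nat.cast_nonneg _) (le_max_left _ _)) hμ.le

theorem CompactSVD.sum_norm_right_apply_sq_le
    (hsvd : CompactSVD (enhance k1 k2 hk1' hk2' (dataMatrix n1 n2 r d f1 f2)) U σ V)
    (hinc : Incoherent n1 n2 r k1 k2 f1 f2 μ) (hμ : 0 < μ) (hn : (0 : ℝ) < n1 * n2)
    (γ : Fin (n1 - k1 + 1) × Fin (n2 - k2 + 1)) :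
    ∑ j, ‖V γ j‖ ^ 2 ≤ μ * (cs n1 n2 k1 k2 * r / (n1 * n2)) := by
  obtain ⟨C, hC⟩ := hsvd.conjTranspose.exists_eq_mul_of_eq_mul
    (by rw [enhance_dataMatrix, conjTranspose_mul])
  refine (sum_norm_sq_le_of_conjTranspose_mul_self_eq_one_of_eq_mul hμ.le hsvd.V_orth hC
    (hinc.sum_norm_sq_le_conjTranspose_ER_mulVec hμ) γ).trans ?_
  rw [sum_norm_conjTranspose_ER_apply_sq]
  exact mul_le_mul_of_nonneg_left
    (div_le_mul_div_of_div_le hn (Nat.cast_nonneg _) (le_max_right _ _)) hμ.le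

end SpectralModel

end EMaC

open EMaC in
theorem incoherence_tangent_crosstalk_bound_general
    (n1 n2 r r' k1 k2 : ℕ)
    (hk1' : k1 ≤ n1) (hk2' : k2 ≤ n2)
    (d : Fin r → ℂ) (f1 f2 : Fin r → ℝ)
    (μ1 : ℝ) (hμ1 : 0 < μ1)
    (hinc : Incoherent n1 n2 r k1 k2 f1 f2 μ1)
    (U : Matrix (Fin k1 × Fin k2) (Fin r') ℂ) (σ : Fin r' → ℝ)
    (V : Matrix (Fin (n1 - k1 + 1) × Fin (n2 - k2 + 1)) (Fin r') ℂ)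
    (hsvd : CompactSVD (enhance k1 k2 hk1' hk2' (dataMatrix n1 n2 r d f1 f2)) U σ V) :
    ∀ a b : Fin n1 × Fin n2,
      ‖finner (Amat n1 n2 k1 k2 b) (projT U V (Amat n1 n2 k1 k2 a))‖ ≤
        Real.sqrt ((wcount n1 n2 k1 k2 b : ℝ) / (wcount n1 n2 k1 k2 a : ℝ)) *
          (3 * μ1 * cs n1 n2 k1 k2 * r / ((n1 : ℝ) * n2)) := by
  intro a b
  have hn : (0 : ℝ) < n1 * n2 := by
    have := a.1.pos
    have := a.2.pos
    positivity
  have hentry := norm_projT_apply_le hsvd.U_orth hsvd.V_orth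
    (hsvd.sum_norm_left_apply_sq_le hinc hμ1 hn) (hsvd.sum_norm_right_apply_sq_le hinc hμ1 hn)
    (by positivity) (sum_norm_Amat_row_le a) (sum_norm_Amat_col_le a)
  calc _ ≤ l1norm (Amat n1 n2 k1 k2 b) *
        (3 * (μ1 * (cs n1 n2 k1 k2 * r / (n1 * n2)) * (√(wcount n1 n2 k1 k2 a))⁻¹)) :=
        norm_finner_le_l1norm_mul hentry
    _ = _ := by
      rw [l1norm_Amat, Real.sqrt_div' _ (Nat.cast_nonneg _)]
      ring

open EMaC in
/-- Lemma 2, second part: under the incoherence property, for any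
two entry locations `a, b`,
`|⟨A_b, P_T(A_a)⟩| ≤ √(ω_b/ω_a) · 3 μ1 c_s r/(n1 n2)`. -/
theorem incoherence_tangent_crosstalk_bound
    (n1 n2 r r' k1 k2 : ℕ) (hn1 : 0 < n1) (hn2 : 0 < n2) (hr : 0 < r)
    (hk1 : 1 ≤ k1) (hk1' : k1 ≤ n1) (hk2 : 1 ≤ k2) (hk2' : k2 ≤ n2)
    (d : Fin r → ℂ) (f1 f2 : Fin r → ℝ)
    (hmodel : SpectralModel r f1 f2)
    (μ1 : ℝ) (hμ1 : 0 < μ1)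
    (hinc : Incoherent n1 n2 r k1 k2 f1 f2 μ1)
    (U : Matrix (Fin k1 × Fin k2) (Fin r') ℂ) (σ : Fin r' → ℝ)
    (V : Matrix (Fin (n1 - k1 + 1) × Fin (n2 - k2 + 1)) (Fin r') ℂ)
    (hsvd : CompactSVD (enhance k1 k2 hk1' hk2' (dataMatrix n1 n2 r d f1 f2)) U σ V) :
    ∀ a b : Fin n1 × Fin n2,
      ‖finner (Amat n1 n2 k1 k2 b) (projT U V (Amat n1 n2 k1 k2 a))‖ ≤
        Real.sqrt ((wcount n1 n2 k1 k2 b : ℝ) / (wcount n1 n2 k1 k2 a : ℝ)) *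
          (3 * μ1 * cs n1 n2 k1 k2 * r / ((n1 : ℝ) * n2)) :=
  incoherence_tangent_crosstalk_bound_general n1 n2 r r' k1 k2 hk1' hk2' d f1 f2 μ1 hμ1 hinc U σ V
    hsvd
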